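/- arXiv:1602.07450 — 3 statements merged into one kernel-verified Lean document; each statement's English description precedes it below -/
import Mathlib

section
/- The rational maps ϑ : ℙ*(T ℙⁿ) ⇢ ℙ^{2n−1} given by z_0 = x_0 y_1, z_1 = (x_1 y_1 − x_0 y_0)/2, z_{2k−2} = x_k y_1, z_{2k−1} = −x_0 y_k/2 (2 ≤ k ≤ n), and β : ℙ^{2n−1} ⇢ ℙ*(T ℙⁿ) given by x_0 = z_0², x_1 = z_0 z_1 + Σ_{j=1}^{n−1} z_{2j} z_{2j+1}, x_k = z_0 z_{2k−2}, y_0 = −z_0 z_1 + Σ_{j=1}^{n−1} z_{2j} z_{2j+1}, y_1 = z_0², y_k = −2 z_0 z_{2k−1} (2 ≤ k ≤ n), are mutually inverse: on the affine chart where x_0 ≠ 0, y_1 ≠ 0 (resp. z_0 ≠ 0), the composite β∘ϑ (resp. ϑ∘β) is the identity up to scalar. -/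
/-- The map ϑ on homogeneous coordinates: `z_0 = x_0 y_1`, `z_1 = (x_1 y_1 − x_0 y_0)/2`,
`z_{2k−2} = x_k y_1`, `z_{2k−1} = −x_0 y_k/2` for `2 ≤ k ≤ n`. -/
noncomputable def thetaMap (x y : ℕ → ℂ) : ℕ → ℂ := fun i =>
  if i = 0 then x 0 * y 1
  else if i = 1 then (x 1 * y 1 - x 0 * y 0) / 2
  else if i % 2 = 0 then x (i / 2 + 1) * y 1
  else -(x 0 * y ((i + 1) / 2)) / 2

/-- The `x`-part of the map β. -/
noncomputable def betaX (n : ℕ) (z : ℕ → ℂ) : ℕ → ℂ := fun k =>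
  if k = 0 then z 0 ^ 2
  else if k = 1 then z 0 * z 1 + ∑ j ∈ Finset.range (n - 1), z (2 * (j + 1)) * z (2 * (j + 1) + 1)
  else z 0 * z (2 * k - 2)

/-- The `y`-part of the map β. -/
noncomputable def betaY (n : ℕ) (z : ℕ → ℂ) : ℕ → ℂ := fun k =>
  if k = 0 then -(z 0 * z 1) + ∑ j ∈ Finset.range (n - 1), z (2 * (j + 1)) * z (2 * (j + 1) + 1)
  else if k = 1 then z 0 ^ 2
  else -2 * (z 0 * z (2 * k - 1))

lemma theta_zero (x y : ℕ → ℂ) : thetaMap x y 0 = x 0 * y 1 := by simp [thetaMap]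

lemma theta_one (x y : ℕ → ℂ) : thetaMap x y 1 = (x 1 * y 1 - x 0 * y 0) / 2 := by
  simp [thetaMap]

lemma theta_even (x y : ℕ → ℂ) (k : ℕ) (hk : 2 ≤ k) :
    thetaMap x y (2 * k - 2) = x k * y 1 := by
  unfold thetaMap
  rw [if_neg (by omega), if_neg (by omega), if_pos (by omega)]
  have : (2 * k - 2) / 2 + 1 = k := by omega
  rw [this]

lemma theta_odd (x y : ℕ → ℂ) (k : ℕ) (hk : 2 ≤ k) :
    thetaMap x y (2 * k - 1) = -(x 0 * y k) / 2 := by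
  unfold thetaMap
  rw [if_neg (by omega), if_neg (by omega), if_neg (by omega)]
  have : (2 * k - 1 + 1) / 2 = k := by omega
  rw [this]

lemma betaX_ge (n : ℕ) (z : ℕ → ℂ) (k : ℕ) (hk : 2 ≤ k) :
    betaX n z k = z 0 * z (2 * k - 2) := by
  unfold betaX
  rw [if_neg (by omega), if_neg (by omega)]

lemma betaY_ge (n : ℕ) (z : ℕ → ℂ) (k : ℕ) (hk : 2 ≤ k) :
    betaY n z k = -2 * (z 0 * z (2 * k - 1)) := by
  unfold betaY
  rw [if_neg (by omega), if_neg (by omega)]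

/-- ϑ and β are mutually inverse up to scalar: on the chart
`x_0 ≠ 0, y_1 ≠ 0` of the incidence variety, `β ∘ ϑ` returns a scalar multiple of
`(x, y)` (one projective scalar for each factor), and on the chart `z_0 ≠ 0`,
`ϑ ∘ β` returns a scalar multiple of `z`. -/
theorem stmt_4 (n : ℕ) (hn : 2 ≤ n) :
    (∀ x y : ℕ → ℂ, (∑ i ∈ Finset.range (n + 1), x i * y i) = 0 → x 0 ≠ 0 → y 1 ≠ 0 →
      ∃ lam mu : ℂ, lam ≠ 0 ∧ mu ≠ 0 ∧
        ∀ k ≤ n, betaX n (thetaMap x y) k = lam * x k ∧ betaY n (thetaMap x y) k = mu * y k)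
    ∧
    (∀ z : ℕ → ℂ, z 0 ≠ 0 →
      ∃ c : ℂ, c ≠ 0 ∧ ∀ i < 2 * n, thetaMap (betaX n z) (betaY n z) i = c * z i) := by
  constructor
  · intro x y h hx hy
    obtain ⟨m, rfl⟩ : ∃ m, n = m + 2 := ⟨n - 2, by omega⟩
    refine ⟨x 0 * y 1 ^ 2, x 0 ^ 2 * y 1, by simp [hx, hy], by simp [hx, hy], ?_⟩
    have hT : x 0 * y 0 + x 1 * y 1 + ∑ j ∈ Finset.range (m + 1), x (j + 2) * y (j + 2) = 0 := by
      rw [show m + 2 + 1 = (m + 1 + 1) + 1 from rfl, Finset.sum_range_succ',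
        Finset.sum_range_succ'] at h
      rw [show (∑ j ∈ Finset.range (m + 1), x (j + 2) * y (j + 2))
          = ∑ j ∈ Finset.range (m + 1), x (j + 1 + 1) * y (j + 1 + 1) from rfl]
      linear_combination h
    have hS : (∑ j ∈ Finset.range (m + 2 - 1),
          thetaMap x y (2 * (j + 1)) * thetaMap x y (2 * (j + 1) + 1))
        = -(x 0 * y 1 / 2) * ∑ j ∈ Finset.range (m + 1), x (j + 2) * y (j + 2) := by
      rw [Finset.mul_sum]
      apply Finset.sum_congr (by norm_num)
      intro j hj
      rw [show 2 * (j + 1) = 2 * (j + 2) - 2 from by omega,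
        show 2 * (j + 2) - 2 + 1 = 2 * (j + 2) - 1 from by omega,
        theta_even x y (j + 2) (by omega), theta_odd x y (j + 2) (by omega)]
      ring
    intro k hk
    constructor
    · match k with
      | 0 =>
        rw [show betaX (m + 2) (thetaMap x y) 0 = thetaMap x y 0 ^ 2 from rfl, theta_zero]
        ring
      | 1 =>
        rw [show betaX (m + 2) (thetaMap x y) 1 = thetaMap x y 0 * thetaMap x y 1
            + ∑ j ∈ Finset.range (m + 2 - 1),
              thetaMap x y (2 * (j + 1)) * thetaMap x y (2 * (j + 1) + 1) from rfl,
          theta_zero, theta_one, hS]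
        linear_combination (-(x 0 * y 1) / 2) * hT
      | (k + 2) =>
        rw [betaX_ge _ _ _ (by omega), theta_zero, theta_even x y (k + 2) (by omega)]
        ring
    · match k with
      | 0 =>
        rw [show betaY (m + 2) (thetaMap x y) 0 = -(thetaMap x y 0 * thetaMap x y 1)
            + ∑ j ∈ Finset.range (m + 2 - 1),
              thetaMap x y (2 * (j + 1)) * thetaMap x y (2 * (j + 1) + 1) from rfl,
          theta_zero, theta_one, hS]
        linear_combination (-(x 0 * y 1) / 2) * hT
      | 1 =>
        rw [show betaY (m + 2) (thetaMap x y) 1 = thetaMap x y 0 ^ 2 from rfl, theta_zero]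
        ring
      | (k + 2) =>
        rw [betaY_ge _ _ _ (by omega), theta_zero, theta_odd x y (k + 2) (by omega)]
        ring
  · intro z hz
    refine ⟨z 0 ^ 3, pow_ne_zero _ hz, ?_⟩
    intro i hi
    have hx0 : betaX n z 0 = z 0 ^ 2 := rfl
    have hy1 : betaY n z 1 = z 0 ^ 2 := rfl
    match i with
    | 0 =>
      rw [theta_zero, hx0, hy1]; ring
    | 1 =>
      rw [theta_one, hx0,
        show betaY n z 0 = -(z 0 * z 1) + ∑ j ∈ Finset.range (n - 1),
          z (2 * (j + 1)) * z (2 * (j + 1) + 1) from rfl,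
        show betaX n z 1 = z 0 * z 1 + ∑ j ∈ Finset.range (n - 1),
          z (2 * (j + 1)) * z (2 * (j + 1) + 1) from rfl, hy1]
      ring
    | (i + 2) =>
      rcases Nat.even_or_odd (i + 2) with he | ho
      · rw [Nat.even_iff] at he
        obtain ⟨k, hk2, hke⟩ : ∃ k, 2 ≤ k ∧ i + 2 = 2 * k - 2 :=
          ⟨(i + 2) / 2 + 1, by omega, by omega⟩
        rw [hke, theta_even _ _ k hk2, hy1, betaX_ge n z k hk2]
        ring
      · rw [Nat.odd_iff] at ho
        obtain ⟨k, hk2, hko⟩ : ∃ k, 2 ≤ k ∧ i + 2 = 2 * k - 1 :=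
          ⟨(i + 3) / 2, by omega, by omega⟩
        rw [hko, theta_odd _ _ k hk2, hx0, betaY_ge n z k hk2]
        ring
end

section
/- Let v : ℂ → ℂ⁴, v(t) = (1, t^a, t^b, t^c) with positive integers a < b < c. Suppose B is a nondegenerate alternating bilinear form on ℂ⁴ such that B(v(t), v'(t)) = 0 for all t. Then c = a + b. -/
open Matrix Polynomial

/-- If a nondegenerate alternating bilinear form `B` on `ℂ⁴` satisfies
`B(v(t), v'(t)) = 0` for all `t`, where `v(t) = (1, t^a, t^b, t^c)` with positive
integers `a < b < c`, then `c = a + b`. -/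
theorem stmt_7 (a b c : ℕ) (ha : 0 < a) (hab : a < b) (hbc : b < c)
    (B : Matrix (Fin 4) (Fin 4) ℂ) (hskew : Bᵀ = -B) (hnd : B.det ≠ 0)
    (h : ∀ t : ℂ, ∑ i : Fin 4, ∑ j : Fin 4,
      B i j * (![1, t ^ a, t ^ b, t ^ c] i)
        * (![0, (a : ℂ) * t ^ (a - 1), (b : ℂ) * t ^ (b - 1), (c : ℂ) * t ^ (c - 1)] j) = 0) :
    c = a + b := by
  by_contra hc
  have hs : ∀ i j, B j i = -B i j := by
    intro i j
    have := congrFun (congrFun hskew i) j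
    simpa [Matrix.transpose_apply] using this
  have hd : ∀ i, B i i = 0 := by
    intro i
    have := hs i i
    have h2 : (2 : ℂ) * B i i = 0 := by linear_combination this
    simpa using h2
  set P : Polynomial ℂ :=
      C (B 0 1 * a) * X ^ (a - 1) + C (B 0 2 * b) * X ^ (b - 1) + C (B 0 3 * c) * X ^ (c - 1)
    + C (B 1 2 * ((b : ℂ) - a)) * X ^ (a + b - 1)
    + C (B 1 3 * ((c : ℂ) - a)) * X ^ (a + c - 1)
    + C (B 2 3 * ((c : ℂ) - b)) * X ^ (b + c - 1) with hPdef
  have hP : P = 0 := by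
    apply Polynomial.funext
    intro t
    have H := h t
    simp only [Fin.sum_univ_four, Matrix.cons_val_zero, Matrix.cons_val_one, Matrix.head_cons,
      Matrix.cons_val_two, Matrix.tail_cons, Matrix.cons_val_three, mul_zero, mul_one,
      zero_add, add_zero] at H
    rw [hs 1 2, hs 1 3, hs 2 3, hd 1, hd 2, hd 3] at H
    have pa : t ^ a = t ^ (a - 1) * t := by rw [← pow_succ]; congr 1; omega
    have pb : t ^ b = t ^ (b - 1) * t := by rw [← pow_succ]; congr 1; omega
    have pc : t ^ c = t ^ (c - 1) * t := by rw [← pow_succ]; congr 1; omega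
    rw [pa, pb, pc] at H
    have pab : t ^ (a + b - 1) = t ^ (a - 1) * (t ^ (b - 1) * t) := by
      rw [← pow_succ, ← pow_add]; congr 1; omega
    have pac : t ^ (a + c - 1) = t ^ (a - 1) * (t ^ (c - 1) * t) := by
      rw [← pow_succ, ← pow_add]; congr 1; omega
    have pbc : t ^ (b + c - 1) = t ^ (b - 1) * (t ^ (c - 1) * t) := by
      rw [← pow_succ, ← pow_add]; congr 1; omega
    simp only [hPdef, Polynomial.eval_add, Polynomial.eval_mul, Polynomial.eval_pow,
      Polynomial.eval_C, Polynomial.eval_X, Polynomial.eval_zero]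
    rw [pab, pac, pbc]
    linear_combination H
  have e01 : B 0 1 = 0 := by
    have := congrArg (fun p => Polynomial.coeff p (a - 1)) hP
    simp only [hPdef, Polynomial.coeff_add, Polynomial.coeff_C_mul, Polynomial.coeff_X_pow,
      Polynomial.coeff_zero, if_pos rfl, ite_true, eq_self_iff_true,
      if_neg (show ¬(a - 1 = b - 1) by omega), if_neg (show ¬(a - 1 = c - 1) by omega),
      if_neg (show ¬(a - 1 = a + b - 1) by omega), if_neg (show ¬(a - 1 = a + c - 1) by omega),
      if_neg (show ¬(a - 1 = b + c - 1) by omega),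
      mul_one, mul_zero, add_zero, zero_add] at this
    exact (mul_eq_zero.mp this).resolve_right (Nat.cast_ne_zero.mpr (by omega))
  have e02 : B 0 2 = 0 := by
    have := congrArg (fun p => Polynomial.coeff p (b - 1)) hP
    simp only [hPdef, Polynomial.coeff_add, Polynomial.coeff_C_mul, Polynomial.coeff_X_pow,
      Polynomial.coeff_zero, if_pos rfl, ite_true, eq_self_iff_true,
      if_neg (show ¬(b - 1 = a - 1) by omega), if_neg (show ¬(b - 1 = c - 1) by omega),
      if_neg (show ¬(b - 1 = a + b - 1) by omega), if_neg (show ¬(b - 1 = a + c - 1) by omega),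
      if_neg (show ¬(b - 1 = b + c - 1) by omega),
      mul_one, mul_zero, add_zero, zero_add] at this
    exact (mul_eq_zero.mp this).resolve_right (Nat.cast_ne_zero.mpr (by omega))
  have e03 : B 0 3 = 0 := by
    have := congrArg (fun p => Polynomial.coeff p (c - 1)) hP
    simp only [hPdef, Polynomial.coeff_add, Polynomial.coeff_C_mul, Polynomial.coeff_X_pow,
      Polynomial.coeff_zero, if_pos rfl, ite_true, eq_self_iff_true,
      if_neg (show ¬(c - 1 = a - 1) by omega), if_neg (show ¬(c - 1 = b - 1) by omega),
      if_neg (show ¬(c - 1 = a + b - 1) by omega), if_neg (show ¬(c - 1 = a + c - 1) by omega),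
      if_neg (show ¬(c - 1 = b + c - 1) by omega),
      mul_one, mul_zero, add_zero, zero_add] at this
    exact (mul_eq_zero.mp this).resolve_right (Nat.cast_ne_zero.mpr (by omega))
  have e12 : B 1 2 = 0 := by
    have := congrArg (fun p => Polynomial.coeff p (a + b - 1)) hP
    simp only [hPdef, Polynomial.coeff_add, Polynomial.coeff_C_mul, Polynomial.coeff_X_pow,
      Polynomial.coeff_zero, if_pos rfl, ite_true, eq_self_iff_true,
      if_neg (show ¬(a + b - 1 = a - 1) by omega), if_neg (show ¬(a + b - 1 = b - 1) by omega),
      if_neg (show ¬(a + b - 1 = c - 1) by omega), if_neg (show ¬(a + b - 1 = a + c - 1) by omega),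
      if_neg (show ¬(a + b - 1 = b + c - 1) by omega),
      mul_one, mul_zero, add_zero, zero_add] at this
    refine (mul_eq_zero.mp this).resolve_right (sub_ne_zero.mpr ?_)
    exact_mod_cast Nat.ne_of_gt hab
  have e13 : B 1 3 = 0 := by
    have := congrArg (fun p => Polynomial.coeff p (a + c - 1)) hP
    simp only [hPdef, Polynomial.coeff_add, Polynomial.coeff_C_mul, Polynomial.coeff_X_pow,
      Polynomial.coeff_zero, if_pos rfl, ite_true, eq_self_iff_true,
      if_neg (show ¬(a + c - 1 = a - 1) by omega), if_neg (show ¬(a + c - 1 = b - 1) by omega),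
      if_neg (show ¬(a + c - 1 = c - 1) by omega), if_neg (show ¬(a + c - 1 = a + b - 1) by omega),
      if_neg (show ¬(a + c - 1 = b + c - 1) by omega),
      mul_one, mul_zero, add_zero, zero_add] at this
    refine (mul_eq_zero.mp this).resolve_right (sub_ne_zero.mpr ?_)
    exact_mod_cast Nat.ne_of_gt (lt_trans hab hbc)
  have e23 : B 2 3 = 0 := by
    have := congrArg (fun p => Polynomial.coeff p (b + c - 1)) hP
    simp only [hPdef, Polynomial.coeff_add, Polynomial.coeff_C_mul, Polynomial.coeff_X_pow,
      Polynomial.coeff_zero, if_pos rfl, ite_true, eq_self_iff_true,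
      if_neg (show ¬(b + c - 1 = a - 1) by omega), if_neg (show ¬(b + c - 1 = b - 1) by omega),
      if_neg (show ¬(b + c - 1 = c - 1) by omega), if_neg (show ¬(b + c - 1 = a + b - 1) by omega),
      if_neg (show ¬(b + c - 1 = a + c - 1) by omega),
      mul_one, mul_zero, add_zero, zero_add] at this
    refine (mul_eq_zero.mp this).resolve_right (sub_ne_zero.mpr ?_)
    exact_mod_cast Nat.ne_of_gt hbc
  have hB : B = 0 := by
    ext i j
    fin_cases i <;> fin_cases j <;>
      simp [hd 0, hd 1, hd 2, hd 3, e01, e02, e03, e12, e13, e23,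
        hs 0 1, hs 0 2, hs 0 3, hs 1 2, hs 1 3, hs 2 3]
  rw [hB] at hnd
  simp at hnd
end

section
/- Let X ⊂ ℙ² be given parametrically near a point by t ↦ (1 : a(t) : b(t)) with a, b holomorphic (or formal power series), b'(0) = 0, a'(0) ≠ 0, and b''(0) ≠ 0. Then the curve t ↦ v(t) = (b'(t) : (2 a(t) b'(t) − a'(t) b(t))/2 : b(t) b'(t) : a'(t)/2) in ℙ³ is an immersion at t = 0, i.e., v(0) and v'(0) (as vectors in ℂ⁴) are linearly independent. -/
open PowerSeries

theorem LinearIndependent.pair_of_apply_eq_zero {R ι : Type*} [Ring R] [NoZeroDivisors R]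
    {x y : ι → R} (i j : ι) (hxi : x i = 0) (hyi : y i ≠ 0) (hxj : x j ≠ 0) :
    LinearIndependent R ![x, y] := by
  rw [LinearIndependent.pair_iff]
  intro s t hst
  have ht : t = 0 := by
    simpa [hxi, hyi] using congrFun hst i
  subst ht
  have hs : s = 0 := by
    simpa [hxj] using congrFun hst j
  exact ⟨hs, rfl⟩

/-- If `t ↦ (1 : a(t) : b(t))` parametrizes a plane curve with
`b'(0) = 0`, `a'(0) ≠ 0`, `b''(0) ≠ 0`, then the curve
`t ↦ (b' : (2ab' − a'b)/2 : bb' : a'/2)` in `ℙ³` is an immersion at `t = 0`: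
the vectors `v(0)` and `v'(0)` in `ℂ⁴` are linearly independent.
(Formalized with `a, b` formal power series and the formal derivative.) -/
theorem stmt_16 (a b : PowerSeries ℂ)
    (hb' : constantCoeff (derivative ℂ b) = 0)
    (ha' : constantCoeff (derivative ℂ a) ≠ 0)
    (hb'' : constantCoeff (derivative ℂ (derivative ℂ b)) ≠ 0)
    (v : Fin 4 → PowerSeries ℂ)
    (hv : v = ![derivative ℂ b,
      (PowerSeries.C (R := ℂ) 2⁻¹) * (2 * a * derivative ℂ b - derivative ℂ a * b),
      b * derivative ℂ b,
      (PowerSeries.C (R := ℂ) 2⁻¹) * derivative ℂ a]) :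
    LinearIndependent ℂ
      ![fun j => constantCoeff (v j),
        fun j => constantCoeff (derivative ℂ (v j))] := by
  subst hv
  -- coordinate 0 of `v(0), v'(0)` is `(b'(0), b''(0))`; coordinate 3 of `v(0)` is `a'(0)/2`
  refine LinearIndependent.pair_of_apply_eq_zero 0 3 hb' hb'' ?_
  simpa using ha'
end
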